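/- Let L_1, ..., L_m be N×N real symmetric positive semidefinite matrices each satisfying L_i·1 = 0, and for μ ∈ Δ^{m-1} set L(μ) = Σ_{i=1}^m μ_i L_i. Assume that the second smallest eigenvalue λ_1(L(μ)) is a simple eigenvalue of L(μ) for every μ ∈ Δ^{m-1}. Then min over unit vectors x ∈ R^N with xᵀ·1 = 0 of max_{i=1,...,m} xᵀ L_i x equals max over μ ∈ Δ^{m-1} of min over unit vectors x ∈ R^N with xᵀ·1 = 0 of xᵀ L(μ) x. -/

import Mathlib

/-!
Weak duality holds because a convex combination of the `xᵀ L_i x` is at most their maximum.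
For the converse, let `μ*` maximise the upper semicontinuous function `μ ↦ min_x xᵀ L(μ) x` on
the simplex and let `v` be a unit eigenvector for `λ₁(L(μ*))`, which is orthogonal to the kernel
direction `1`. Since `λ₁` is simple, `xᵀ L(μ*) x - λ₁` grows quadratically in the distance from
`±v`, while each `xᵀ L_i x` moves at most linearly. Hence moving `μ*` towards the vertex `e_i`
raises the minimum by at least `t (vᵀ L_i v - λ₁) - O(t²)`, and maximality of `μ*` forces
`vᵀ L_i v ≤ λ₁` for every `i`, so `v` shows `min_x max_i xᵀ L_i x ≤ λ₁`.
-/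

open Matrix

/-- Eigenvalues of a real symmetric matrix, sorted in increasing order
(`sortedEig L 0 ≤ sortedEig L 1 ≤ ...`); junk value `0` if `L` is not symmetric. -/
noncomputable def sortedEig {N : ℕ} (L : Matrix (Fin N) (Fin N) ℝ) : Fin N → ℝ :=
  if h : L.IsHermitian then h.eigenvalues ∘ ⇑(Tuple.sort h.eigenvalues) else fun _ => 0

open Finset Filter Topology
open scoped RealInnerProductSpace

section InnerProductSpace

variable {E : Type*} [NormedAddCommGroup E] [InnerProductSpace ℝ E]

lemma LinearMap.IsSymmetric.inner_map_self_sub_inner_map_self {T : E →ₗ[ℝ] E}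
    (hT : T.IsSymmetric) (x y : E) :
    ⟪x, T x⟫ - ⟪y, T y⟫ = ⟪x + y, T (x - y)⟫ := by
  have hxy : ⟪y, T x⟫ = ⟪x, T y⟫ := by rw [← hT, real_inner_comm]
  simp only [map_sub, inner_add_left, inner_sub_right]
  linarith

lemma abs_inner_map_self_sub_inner_map_self_le {T : E →L[ℝ] E}
    (hT : (T : E →ₗ[ℝ] E).IsSymmetric) (x y : E) :
    |⟪x, T x⟫ - ⟪y, T y⟫| ≤ ‖T‖ * (‖x - y‖ * ‖x + y‖) := by
  rw [show ⟪x, T x⟫ - ⟪y, T y⟫ = ⟪x + y, T (x - y)⟫ from hT.inner_map_self_sub_inner_map_self x y]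
  calc |⟪x + y, T (x - y)⟫| ≤ ‖x + y‖ * ‖T (x - y)‖ := abs_real_inner_le_norm _ _
    _ ≤ ‖x + y‖ * (‖T‖ * ‖x - y‖) := by gcongr; exact T.le_opNorm _
    _ = ‖T‖ * (‖x - y‖ * ‖x + y‖) := by ring

lemma norm_sub_mul_norm_add_of_norm_eq_one {x y : E} (hx : ‖x‖ = 1) (hy : ‖y‖ = 1) :
    ‖x - y‖ * ‖x + y‖ = 2 * √(1 - ⟪x, y⟫ ^ 2) := by
  have hsq : (‖x - y‖ * ‖x + y‖) ^ 2 = 2 ^ 2 * (1 - ⟪x, y⟫ ^ 2) := by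
    rw [mul_pow, norm_sub_sq_real, norm_add_sq_real, hx, hy]
    ring
  rw [← Real.sqrt_sq (by positivity : 0 ≤ ‖x - y‖ * ‖x + y‖), hsq, Real.sqrt_mul (by positivity),
    Real.sqrt_sq zero_le_two]

end InnerProductSpace

section DotProduct

variable {ι n : Type*} [Fintype ι] [Fintype n]

lemma dotProduct_sum_smul_mulVec {R : Type*} [CommSemiring R] (M : ι → Matrix n n R)
    (μ : ι → R) (x : n → R) :
    x ⬝ᵥ ((∑ i, μ i • M i) *ᵥ x) = ∑ i, μ i * (x ⬝ᵥ (M i *ᵥ x)) := by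
  simp [sum_mulVec, dotProduct_sum, smul_mulVec]

lemma dotProduct_eq_inner_toLp (x y : n → ℝ) :
    x ⬝ᵥ y = ⟪WithLp.toLp 2 x, WithLp.toLp 2 y⟫ := by
  simp [EuclideanSpace.inner_toLp_toLp, dotProduct_comm]

lemma norm_toLp_eq_one {x : n → ℝ} (hx : x ⬝ᵥ x = 1) : ‖WithLp.toLp 2 x‖ = 1 := by
  rw [← pow_eq_one_iff_of_nonneg (norm_nonneg _) two_ne_zero, ← real_inner_self_eq_norm_sq,
    ← dotProduct_eq_inner_toLp, hx]

lemma sq_dotProduct_le_one {x y : n → ℝ} (hx : x ⬝ᵥ x = 1) (hy : y ⬝ᵥ y = 1) :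
    (x ⬝ᵥ y) ^ 2 ≤ 1 := by
  rw [sq_le_one_iff_abs_le_one, dotProduct_eq_inner_toLp]
  simpa [norm_toLp_eq_one hx, norm_toLp_eq_one hy] using
    abs_real_inner_le_norm (WithLp.toLp 2 x) (WithLp.toLp 2 y)

lemma OrthonormalBasis.dotProduct_eq_sum {ι : Type*} [Fintype ι]
    (b : OrthonormalBasis ι ℝ (EuclideanSpace ℝ n)) (x y : n → ℝ) :
    x ⬝ᵥ y = ∑ j, (⇑(b j) ⬝ᵥ x) * (⇑(b j) ⬝ᵥ y) := by
  rw [dotProduct_eq_inner_toLp, ← b.sum_inner_mul_inner]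
  congr! 2 with j
  simp [dotProduct_eq_inner_toLp, real_inner_comm]

variable [DecidableEq n]

lemma Matrix.IsHermitian.abs_dotProduct_mulVec_sub_le {B : Matrix n n ℝ} (hB : B.IsHermitian)
    {x y : n → ℝ} (hx : x ⬝ᵥ x = 1) (hy : y ⬝ᵥ y = 1) :
    |x ⬝ᵥ (B *ᵥ x) - y ⬝ᵥ (B *ᵥ y)| ≤
      2 * ‖toEuclideanCLM (𝕜 := ℝ) B‖ * √(1 - (x ⬝ᵥ y) ^ 2) := by
  have hT : (toEuclideanCLM (𝕜 := ℝ) B : EuclideanSpace ℝ n →ₗ[ℝ] _).IsSymmetric :=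
    isSymmetric_toEuclideanLin_iff.mpr hB
  have h := abs_inner_map_self_sub_inner_map_self_le hT (WithLp.toLp 2 x) (WithLp.toLp 2 y)
  rw [norm_sub_mul_norm_add_of_norm_eq_one (norm_toLp_eq_one hx) (norm_toLp_eq_one hy),
    inner_toEuclideanCLM, inner_toEuclideanCLM, ← dotProduct_eq_inner_toLp] at h
  linarith

end DotProduct

section Spectral

variable {n : Type*} [Fintype n] [DecidableEq n]

lemma Matrix.IsHermitian.eigenvectorBasis_dotProduct_mulVec {A : Matrix n n ℝ}
    (hA : A.IsHermitian) (j : n) (x : n → ℝ) :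
    ⇑(hA.eigenvectorBasis j) ⬝ᵥ (A *ᵥ x) =
      hA.eigenvalues j * (⇑(hA.eigenvectorBasis j) ⬝ᵥ x) := by
  rw [dotProduct_mulVec, ← mulVec_transpose, ← conjTranspose_eq_transpose_of_trivial, hA.eq,
    hA.mulVec_eigenvectorBasis, smul_dotProduct, smul_eq_mul]

lemma Matrix.IsHermitian.dotProduct_mulVec_eq_sum {A : Matrix n n ℝ} (hA : A.IsHermitian)
    (x : n → ℝ) :
    x ⬝ᵥ (A *ᵥ x) = ∑ j, hA.eigenvalues j * (⇑(hA.eigenvectorBasis j) ⬝ᵥ x) ^ 2 := by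
  rw [hA.eigenvectorBasis.dotProduct_eq_sum]
  simp only [hA.eigenvectorBasis_dotProduct_mulVec]
  exact sum_congr rfl fun j _ => by ring

lemma sortedEig_eq {N : ℕ} {A : Matrix (Fin N) (Fin N) ℝ} (hA : A.IsHermitian) :
    sortedEig A = hA.eigenvalues ∘ ⇑(Tuple.sort hA.eigenvalues) :=
  dif_pos hA

lemma Monotone.exists_pos_forall_add_le {N : ℕ} {β : Fin N → ℝ} (hβ : Monotone β) {i : Fin N}
    (hi : ∀ j, β j = β i → j = i) : ∃ G > 0, ∀ j, i < j → β i + G ≤ β j := by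
  by_cases h : (i : ℕ) + 1 < N
  · let i' : Fin N := ⟨i + 1, h⟩
    have hii' : i < i' := Fin.lt_def.mpr (Nat.lt_succ_self _)
    refine ⟨β i' - β i, sub_pos.mpr ((hβ hii'.le).lt_of_ne fun e => hii'.ne' (hi i' e.symm)),
      fun j hj => ?_⟩
    have : i' ≤ j := Fin.le_def.mpr (Fin.lt_def.mp hj)
    linarith [hβ this]
  · exact ⟨1, one_pos, fun j hj => absurd j.isLt (by have := Fin.lt_def.mp hj; omega)⟩

lemma add_mul_one_sub_sq_le_sum_mul_sq {ι : Type*} [Fintype ι] [DecidableEq ι] {α c : ι → ℝ}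
    {j₀ j₁ : ι} {G : ℝ} (hc₀ : c j₀ = 0) (hc : ∑ j, c j ^ 2 = 1)
    (hgap : ∀ j, j ≠ j₀ → j ≠ j₁ → α j₁ + G ≤ α j) :
    α j₁ + G * (1 - c j₁ ^ 2) ≤ ∑ j, α j * c j ^ 2 := by
  have hterm : ∀ j, 0 ≤ (α j - α j₁ - G) * c j ^ 2 + if j = j₁ then G * c j ^ 2 else 0 := by
    intro j
    by_cases h₁ : j = j₁
    · subst h₁; simp
    by_cases h₀ : j = j₀
    · subst h₀; simp [hc₀]
    simp only [h₁, if_false, add_zero]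
    exact mul_nonneg (by linarith [hgap j h₀ h₁]) (sq_nonneg _)
  have hsum := sum_nonneg fun j (_ : j ∈ univ) => hterm j
  simp only [sum_add_distrib, sum_ite_eq', mem_univ, if_true, sub_mul, sum_sub_distrib] at hsum
  rw [← mul_sum, ← mul_sum, hc] at hsum
  linarith

lemma Matrix.PosSemidef.exists_second_eigenvalue_gap {N : ℕ} (hN : 1 < N)
    {A : Matrix (Fin N) (Fin N) ℝ} (hA : A.PosSemidef)
    (hsimple : ∀ j, sortedEig A j = sortedEig A ⟨1, hN⟩ → j = ⟨1, hN⟩) :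
    ∃ j₀ j₁ : Fin N, j₀ ≠ j₁ ∧ hA.1.eigenvalues j₁ = sortedEig A ⟨1, hN⟩ ∧
      0 < hA.1.eigenvalues j₁ ∧
      ∃ G > 0, ∀ j, j ≠ j₀ → j ≠ j₁ → hA.1.eigenvalues j₁ + G ≤ hA.1.eigenvalues j := by
  set σ := Tuple.sort hA.1.eigenvalues
  have hσ : ∀ k, sortedEig A k = hA.1.eigenvalues (σ k) := fun k => by rw [sortedEig_eq hA.1]; rfl
  have hβ : Monotone (sortedEig A) := sortedEig_eq hA.1 ▸ Tuple.monotone_sort _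
  set i₀ : Fin N := ⟨0, by omega⟩
  set i₁ : Fin N := ⟨1, hN⟩
  have h01 : i₀ < i₁ := Fin.lt_def.mpr zero_lt_one
  have hpos : 0 < sortedEig A i₁ :=
    (hσ i₀ ▸ hA.eigenvalues_nonneg (σ i₀)).trans_lt
      ((hβ h01.le).lt_of_ne fun e => h01.ne (hsimple _ e))
  obtain ⟨G, hG, hgap⟩ := hβ.exists_pos_forall_add_le hsimple
  refine ⟨σ i₀, σ i₁, σ.injective.ne h01.ne, (hσ i₁).symm, hσ i₁ ▸ hpos, G, hG,
    fun j h₀ h₁ => ?_⟩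
  have hk : i₁ < σ.symm j := by
    have h₀' : σ.symm j ≠ i₀ := fun e => h₀ (by rw [← e, Equiv.apply_symm_apply])
    have h₁' : σ.symm j ≠ i₁ := fun e => h₁ (by rw [← e, Equiv.apply_symm_apply])
    simp only [i₀, i₁, Ne, Fin.ext_iff, Fin.lt_def] at h₀' h₁' ⊢
    omega
  simpa [hσ] using hgap _ hk

theorem Matrix.PosSemidef.exists_second_eigenvector_quadratic_growth {N : ℕ} (hN : 1 < N)
    {A : Matrix (Fin N) (Fin N) ℝ} (hA : A.PosSemidef) {z : Fin N → ℝ} (hz : z ≠ 0)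
    (hAz : A *ᵥ z = 0)
    (hsimple : ∀ j, sortedEig A j = sortedEig A ⟨1, hN⟩ → j = ⟨1, hN⟩) :
    ∃ v : Fin N → ℝ, v ⬝ᵥ v = 1 ∧ v ⬝ᵥ z = 0 ∧ v ⬝ᵥ (A *ᵥ v) = sortedEig A ⟨1, hN⟩ ∧
      ∃ G > 0, ∀ x : Fin N → ℝ, x ⬝ᵥ x = 1 → x ⬝ᵥ z = 0 →
        sortedEig A ⟨1, hN⟩ + G * (1 - (v ⬝ᵥ x) ^ 2) ≤ x ⬝ᵥ (A *ᵥ x) := by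
  obtain ⟨j₀, j₁, h01, hlam, hpos, G, hG, hgap⟩ := hA.exists_second_eigenvalue_gap hN hsimple
  set u := hA.1.eigenvectorBasis
  -- all eigenvalues but `α j₀` are positive, so the kernel vector `z` lies along `u j₀`
  have hzc : ∀ j ≠ j₀, ⇑(u j) ⬝ᵥ z = 0 := by
    intro j hj
    have hαj : 0 < hA.1.eigenvalues j := by
      by_cases h₁ : j = j₁
      · exact h₁ ▸ hpos
      · linarith [hgap j hj h₁]
    have := hA.1.eigenvectorBasis_dotProduct_mulVec j z
    rw [hAz, dotProduct_zero] at this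
    exact (mul_eq_zero.mp this.symm).resolve_left hαj.ne'
  have hz₀ : ⇑(u j₀) ⬝ᵥ z ≠ 0 := by
    intro h
    apply hz
    rw [← dotProduct_self_eq_zero, u.dotProduct_eq_sum]
    exact sum_eq_zero fun j _ => by by_cases hj : j = j₀ <;> simp [hj, h, hzc]
  have hx₀ : ∀ x, x ⬝ᵥ z = 0 → ⇑(u j₀) ⬝ᵥ x = 0 := by
    intro x hx
    rw [u.dotProduct_eq_sum, sum_eq_single j₀ (fun j _ hj => by simp [hzc j hj]) (by simp)] at hx
    exact (mul_eq_zero.mp hx).resolve_right hz₀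
  have hu₁ : ⇑(u j₁) ⬝ᵥ ⇑(u j₁) = 1 := by simp [dotProduct_eq_inner_toLp]
  refine ⟨u j₁, hu₁, hzc j₁ h01.symm, ?_, G, hG, fun x hx hxz => ?_⟩
  · rw [hA.1.mulVec_eigenvectorBasis, dotProduct_smul, hu₁, smul_eq_mul, mul_one, hlam]
  · rw [← hlam, hA.1.dotProduct_mulVec_eq_sum]
    refine add_mul_one_sub_sq_le_sum_mul_sq (c := fun j => ⇑(u j) ⬝ᵥ x) (hx₀ x hxz) ?_ hgap
    simpa only [sq, ← u.dotProduct_eq_sum] using hx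

end Spectral

lemma le_of_forall_iInf_segment_le {X : Type*} [Nonempty X] {F g p : X → ℝ} {a b G K : ℝ}
    (hG : 0 < G) (hF : ∀ x, a + G * p x ^ 2 ≤ F x) (hg : ∀ x, b - K * p x ≤ g x)
    (h : ∀ t ∈ Set.Ioc (0 : ℝ) (1 / 2), ⨅ x, ((1 - t) * F x + t * g x) ≤ a) : b ≤ a := by
  have hlin : ∀ t ∈ Set.Ioc (0 : ℝ) (1 / 2), b - a ≤ K ^ 2 / (2 * G) * t := by
    rintro t ⟨ht₀, ht₁⟩
    have hpoint : ∀ x,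
        (1 - t) * a + t * b - K ^ 2 / (2 * G) * t ^ 2 ≤ (1 - t) * F x + t * g x := by
      intro x
      -- completing the square: `G/2 * p² - t K p + K² t² / (2G) = (G p - t K)² / (2G)`
      have hsq : 0 ≤ (G * p x - t * K) ^ 2 / (2 * G) := by positivity
      have hexp : (G * p x - t * K) ^ 2 / (2 * G) =
          G / 2 * p x ^ 2 - t * K * p x + K ^ 2 / (2 * G) * t ^ 2 := by
        field_simp
        ring
      have h₁ := mul_nonneg (by linarith : (0 : ℝ) ≤ 1 - t) (sub_nonneg.mpr (hF x))
      have h₂ := mul_nonneg ht₀.le (sub_nonneg.mpr (hg x))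
      have h₃ := mul_nonneg (by linarith : (0 : ℝ) ≤ 1 / 2 - t) (by positivity : 0 ≤ G * p x ^ 2)
      nlinarith
    have := (le_ciInf hpoint).trans (h t ⟨ht₀, ht₁⟩)
    nlinarith
  rw [← sub_nonpos]
  refine ge_of_tendsto (x := 𝓝[>] (0 : ℝ)) (tendsto_nhdsWithin_of_tendsto_nhds ?_)
    (eventually_of_mem (Ioc_mem_nhdsGT (by norm_num)) hlin)
  simpa using (tendsto_id (x := 𝓝 (0 : ℝ))).const_mul (K ^ 2 / (2 * G))

section Minimax

variable {X ι : Type*} [Fintype ι]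

noncomputable def lowerValue (q : ι → X → ℝ) (μ : ι → ℝ) : ℝ := ⨅ x, ∑ i, μ i * q i x

variable {q : ι → X → ℝ}

lemma bddBelow_range_sum_mul (hq : ∀ i x, 0 ≤ q i x) {μ : ι → ℝ} (hμ : μ ∈ stdSimplex ℝ ι) :
    BddBelow (Set.range fun x => ∑ i, μ i * q i x) :=
  ⟨0, by rintro _ ⟨x, rfl⟩; exact sum_nonneg fun i _ => mul_nonneg (hμ.1 i) (hq i x)⟩

lemma sum_mul_le_iSup {μ : ι → ℝ} (hμ : μ ∈ stdSimplex ℝ ι) (x : X) :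
    ∑ i, μ i * q i x ≤ ⨆ i, q i x :=
  calc ∑ i, μ i * q i x ≤ ∑ i, μ i * ⨆ j, q j x :=
        sum_le_sum fun i _ => mul_le_mul_of_nonneg_left
          (le_ciSup (f := fun j => q j x) (Set.finite_range _).bddAbove i) (hμ.1 i)
    _ = ⨆ j, q j x := by rw [← sum_mul, hμ.2, one_mul]

lemma lowerValue_le_iInf_iSup [Nonempty X] (hq : ∀ i x, 0 ≤ q i x) {μ : ι → ℝ}
    (hμ : μ ∈ stdSimplex ℝ ι) : lowerValue q μ ≤ ⨅ x, ⨆ i, q i x :=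
  le_ciInf fun x => (ciInf_le (bddBelow_range_sum_mul hq hμ) x).trans (sum_mul_le_iSup hμ x)

lemma exists_isMaxOn_lowerValue [Nonempty ι] (hq : ∀ i x, 0 ≤ q i x) :
    ∃ μ ∈ stdSimplex ℝ ι, IsMaxOn (lowerValue q) (stdSimplex ℝ ι) μ := by
  classical
  refine UpperSemicontinuousOn.exists_isMaxOn
    ⟨_, single_mem_stdSimplex ℝ (Classical.arbitrary ι)⟩ (isCompact_stdSimplex ℝ ι) ?_
  refine upperSemicontinuousOn_ciInf (fun μ hμ => bddBelow_range_sum_mul hq hμ) fun x => ?_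
  exact (continuous_finsetSum _ fun i _ => (continuous_apply i).mul continuous_const)
    |>.continuousOn.upperSemicontinuousOn

lemma le_lowerValue_of_isMaxOn [Nonempty X] {μ : ι → ℝ} (hμ : μ ∈ stdSimplex ℝ ι)
    (hmax : IsMaxOn (lowerValue q) (stdSimplex ℝ ι) μ) {x₀ : X} {p : X → ℝ} {G : ℝ} (hG : 0 < G)
    (hgrowth : ∀ x, ∑ i, μ i * q i x₀ + G * p x ^ 2 ≤ ∑ i, μ i * q i x) (i : ι) {K : ℝ}
    (hlip : ∀ x, q i x₀ - K * p x ≤ q i x) : q i x₀ ≤ lowerValue q μ := by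
  classical
  have hx₀ : lowerValue q μ ≤ ∑ i, μ i * q i x₀ :=
    ciInf_le ⟨_, by
      rintro _ ⟨x, rfl⟩
      exact (le_add_of_nonneg_right (mul_nonneg hG.le (sq_nonneg _))).trans (hgrowth x)⟩ x₀
  refine le_of_forall_iInf_segment_le (F := fun x => ∑ i, μ i * q i x) hG
    (fun x => by linarith [hgrowth x]) hlip fun t ⟨ht₀, ht₁⟩ => ?_
  set ν := (1 - t) • μ + t • Pi.single i 1
  have hν : ν ∈ stdSimplex ℝ ι :=
    convex_stdSimplex ℝ ι hμ (single_mem_stdSimplex ℝ i) (by linarith) ht₀.le (by ring)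
  have hsum : ∀ x, ∑ k, ν k * q k x = (1 - t) * ∑ k, μ k * q k x + t * q i x := fun x => by
    simp [ν, add_mul, sum_add_distrib, mul_sum, Pi.single_apply, mul_assoc]
  simpa only [lowerValue, hsum] using isMaxOn_iff.mp hmax ν hν

lemma iInf_iSup_eq_iSup_lowerValue [Nonempty X] [Nonempty ι] (hq : ∀ i x, 0 ≤ q i x)
    {μ : ι → ℝ} (hμ : μ ∈ stdSimplex ℝ ι) {x₀ : X} (h : ∀ i, q i x₀ ≤ lowerValue q μ) :
    ⨅ x, ⨆ i, q i x = ⨆ ν : stdSimplex ℝ ι, lowerValue q ν := by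
  have : Nonempty (stdSimplex ℝ ι) := ⟨⟨μ, hμ⟩⟩
  refine le_antisymm ?_ (ciSup_le fun ν => lowerValue_le_iInf_iSup hq ν.2)
  calc ⨅ x, ⨆ i, q i x ≤ ⨆ i, q i x₀ :=
        ciInf_le ⟨0, by rintro _ ⟨x, rfl⟩; exact Real.iSup_nonneg (hq · x)⟩ x₀
    _ ≤ lowerValue q μ := ciSup_le h
    _ ≤ ⨆ ν : stdSimplex ℝ ι, lowerValue q ν :=
        le_ciSup (f := fun ν : stdSimplex ℝ ι => lowerValue q ν)
          ⟨_, by rintro _ ⟨ν, rfl⟩; exact lowerValue_le_iInf_iSup hq ν.2⟩ ⟨μ, hμ⟩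

end Minimax

/-- Theorem 2 of Coifman et al.: assuming `λ_1(L(μ))` is a simple eigenvalue for every
`μ ∈ Δ^{m-1}` (i.e. the value `λ_1` appears exactly once in the sorted list of eigenvalues),
the min over unit `x ⊥ 1` of `max_i xᵀ L_i x` equals the max over `μ ∈ Δ^{m-1}` of the min
over unit `x ⊥ 1` of `xᵀ L(μ) x`. -/
theorem stmt2 {N m : ℕ} (hm : 0 < m) (hN : 1 < N)
    (L : Fin m → Matrix (Fin N) (Fin N) ℝ)
    (hpsd : ∀ i, (L i).PosSemidef)
    (hone : ∀ i, L i *ᵥ (fun _ => (1 : ℝ)) = 0)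
    (hsimple : ∀ μ ∈ stdSimplex ℝ (Fin m), ∀ j : Fin N,
      sortedEig (∑ i, μ i • L i) j = sortedEig (∑ i, μ i • L i) ⟨1, hN⟩ → j = ⟨1, hN⟩) :
    (⨅ x : {x : Fin N → ℝ // x ⬝ᵥ x = 1 ∧ x ⬝ᵥ (fun _ => (1 : ℝ)) = 0},
      ⨆ i : Fin m, (x : Fin N → ℝ) ⬝ᵥ (L i *ᵥ (x : Fin N → ℝ))) =
    (⨆ μ : stdSimplex ℝ (Fin m),
      ⨅ x : {x : Fin N → ℝ // x ⬝ᵥ x = 1 ∧ x ⬝ᵥ (fun _ => (1 : ℝ)) = 0},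
        (x : Fin N → ℝ) ⬝ᵥ ((∑ i, (μ : Fin m → ℝ) i • L i) *ᵥ (x : Fin N → ℝ))) := by
  have : Nonempty (Fin m) := ⟨⟨0, hm⟩⟩
  let S := {x : Fin N → ℝ // x ⬝ᵥ x = 1 ∧ x ⬝ᵥ (fun _ => (1 : ℝ)) = 0}
  set q : Fin m → S → ℝ := fun i x => (x : Fin N → ℝ) ⬝ᵥ (L i *ᵥ (x : Fin N → ℝ))
  have hq : ∀ i x, 0 ≤ q i x := fun i x => by simpa using (hpsd i).dotProduct_mulVec_nonneg x.1
  obtain ⟨μ, hμ, hmax⟩ := exists_isMaxOn_lowerValue hq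
  set A := ∑ i, μ i • L i
  have hA : A.PosSemidef := posSemidef_sum _ fun i _ => (hpsd i).smul (hμ.1 i)
  have hA1 : A *ᵥ (fun _ => (1 : ℝ)) = 0 := by simp [A, sum_mulVec, smul_mulVec, hone]
  have h1 : (fun _ => (1 : ℝ)) ≠ 0 := fun h => one_ne_zero (congrFun h (⟨0, by omega⟩ : Fin N))
  obtain ⟨v, hv, hv1, hvA, G, hG, hgap⟩ :=
    hA.exists_second_eigenvector_quadratic_growth hN h1 hA1 (hsimple μ hμ)
  have : Nonempty S := ⟨⟨v, hv, hv1⟩⟩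
  set p : S → ℝ := fun x => √(1 - (v ⬝ᵥ x) ^ 2)
  have hp : ∀ x, p x ^ 2 = 1 - (v ⬝ᵥ x) ^ 2 := fun x =>
    Real.sq_sqrt (sub_nonneg.mpr (sq_dotProduct_le_one hv x.2.1))
  have hgrowth : ∀ x, ∑ i, μ i * q i ⟨v, hv, hv1⟩ + G * p x ^ 2 ≤ ∑ i, μ i * q i x := fun x => by
    simp only [q, ← dotProduct_sum_smul_mulVec, hp]
    exact hvA ▸ hgap x x.2.1 x.2.2
  have hlip : ∀ i x, q i ⟨v, hv, hv1⟩ - 2 * ‖toEuclideanCLM (𝕜 := ℝ) (L i)‖ * p x ≤ q i x :=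
    fun i x => by
      have := (hpsd i).1.abs_dotProduct_mulVec_sub_le x.2.1 hv
      rw [dotProduct_comm _ v] at this
      simp only [q, p]
      linarith [(abs_le.mp this).1]
  simp only [dotProduct_sum_smul_mulVec]
  exact iInf_iSup_eq_iSup_lowerValue hq hμ fun i =>
    le_lowerValue_of_isMaxOn hμ hmax hG hgrowth i (hlip i)
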